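/- arXiv:2411.05573 — 2 statements merged into one kernel-verified Lean document; each statement's English description precedes it below -/
import Mathlib

section
/- Selberg's identity: for every positive integer n, the sum over divisors d of n of μ(d)·(log(n/d))² equals Λ(n)·log(n) + (Λ∗Λ)(n), where ∗ denotes Dirichlet convolution. -/
open ArithmeticFunction

theorem stmt_1 (n : ℕ) (hn : 0 < n) :
    ∑ d ∈ n.divisors, (ArithmeticFunction.moebius d : ℝ) * (Real.log ((n : ℝ) / (d : ℝ))) ^ 2
      = ArithmeticFunction.vonMangoldt n * Real.log n
        + ∑ d ∈ n.divisors,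
            ArithmeticFunction.vonMangoldt d * ArithmeticFunction.vonMangoldt (n / d) := by
  have key : ∀ m : ℕ, 0 < m →
      ∑ d ∈ m.divisors,
          (Λ d * Real.log d + ∑ e ∈ d.divisors, Λ e * Λ (d / e))
        = Real.log m ^ 2 := by
    intro m hm
    rw [Finset.sum_add_distrib]
    have h1 : ∑ d ∈ m.divisors, ∑ e ∈ d.divisors, Λ e * Λ (d / e)
        = ∑ d ∈ m.divisors, Λ d * Real.log ((m / d : ℕ) : ℝ) := by
      have h2 : ∀ d ∈ m.divisors, ∑ e ∈ d.divisors, Λ e * Λ (d / e) = (Λ * Λ) d := by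
        intro d _
        rw [mul_apply, Nat.sum_divisorsAntidiagonal (fun a b => Λ a * Λ b)]
      rw [Finset.sum_congr rfl h2, ← coe_mul_zeta_apply, mul_assoc, vonMangoldt_mul_zeta,
        mul_apply, Nat.sum_divisorsAntidiagonal (fun a b => Λ a * ArithmeticFunction.log b)]
      simp [ArithmeticFunction.log_apply]
    rw [h1, ← Finset.sum_add_distrib]
    have h3 : ∀ d ∈ m.divisors,
        Λ d * Real.log d + Λ d * Real.log ((m / d : ℕ) : ℝ) = Λ d * Real.log m := by
      intro d hd
      rw [Nat.mem_divisors] at hd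
      obtain ⟨hdvd, hm0⟩ := hd
      have hd0 : d ≠ 0 := by rintro rfl; exact hm0 (Nat.zero_dvd.mp hdvd)
      have hnd0 : m / d ≠ 0 := (Nat.div_pos (Nat.le_of_dvd hm hdvd) (Nat.pos_of_ne_zero hd0)).ne'
      rw [← mul_add, ← Real.log_mul (Nat.cast_ne_zero.mpr hd0) (Nat.cast_ne_zero.mpr hnd0),
        ← Nat.cast_mul, Nat.mul_div_cancel' hdvd]
    rw [Finset.sum_congr rfl h3, ← Finset.sum_mul, vonMangoldt_sum, sq]
  have inv := ArithmeticFunction.sum_eq_iff_sum_smul_moebius_eq.mp key n hn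
  rw [← inv, Nat.sum_divisorsAntidiagonal (fun a b => (moebius a) • Real.log b ^ 2)]
  apply Finset.sum_congr rfl
  intro d hd
  rw [Nat.mem_divisors] at hd
  obtain ⟨hdvd, hn0⟩ := hd
  have hd0 : (d : ℝ) ≠ 0 := Nat.cast_ne_zero.mpr (by rintro rfl; exact hn0 (Nat.zero_dvd.mp hdvd))
  rw [Nat.cast_div hdvd hd0, zsmul_eq_mul]
end

section
/- For every integer k ≥ 1, the coefficient of (s−1)^{−k−2} in the Laurent expansion of (ζ'/ζ)'(s)·(−ζ'/ζ(s))^{k−1}·ζ(s)²·(1/s) about s = 1 equals −1 − (k−3)γ₀. -/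
open Filter Topology

noncomputable def myF : ℂ → ℂ :=
  Function.update (fun s => riemannZeta s - 1 / (s - 1)) 1
    (Real.eulerMascheroniConstant : ℂ)

noncomputable def myZ : ℂ → ℂ := fun s => 1 + (s - 1) * myF s

noncomputable def myH : ℂ → ℂ := fun s => deriv myZ s / myZ s

lemma myF_eq {s : ℂ} (hs : s ≠ 1) : myF s = riemannZeta s - 1 / (s - 1) :=
  Function.update_of_ne hs _ _

lemma myF_one : myF 1 = (Real.eulerMascheroniConstant : ℂ) :=
  Function.update_self _ _ _

lemma myF_analytic : AnalyticAt ℂ myF 1 := by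
  apply Complex.analyticAt_of_differentiable_on_punctured_nhds_of_continuousAt
  · filter_upwards [self_mem_nhdsWithin] with z hz
    have hz' : z ≠ 1 := hz
    have hg : DifferentiableAt ℂ (fun s => riemannZeta s - 1 / (s - 1)) z := by
      refine (differentiableAt_riemannZeta hz').sub ?_
      exact (differentiableAt_const _).div ((differentiableAt_id).sub_const 1)
        (sub_ne_zero.2 hz')
    refine hg.congr_of_eventuallyEq ?_
    filter_upwards [eventually_ne_nhds hz'] with w hw
    exact myF_eq hw
  · rw [← continuousWithinAt_compl_self]
    unfold ContinuousWithinAt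
    rw [myF_one]
    refine tendsto_riemannZeta_sub_one_div.congr' ?_
    filter_upwards [self_mem_nhdsWithin] with w hw
    exact (myF_eq hw).symm

lemma myZ_one : myZ 1 = 1 := by simp [myZ]

lemma myZ_analytic : AnalyticAt ℂ myZ 1 := by
  exact analyticAt_const.add (((analyticAt_id).sub analyticAt_const).mul myF_analytic)

lemma zeta_eq {s : ℂ} (hs : s ≠ 1) : riemannZeta s = myZ s / (s - 1) := by
  have hw : s - 1 ≠ 0 := sub_ne_zero.2 hs
  rw [myZ, myF_eq hs]
  field_simp
  ring

lemma myZ_hasDeriv : HasDerivAt myZ (Real.eulerMascheroniConstant : ℂ) 1 := by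
  have h1 : HasDerivAt (fun s : ℂ => s - 1) 1 1 := (hasDerivAt_id 1).sub_const 1
  have h2 : HasDerivAt myF (deriv myF 1) 1 := myF_analytic.differentiableAt.hasDerivAt
  have h3 := (h1.mul h2).const_add (1 : ℂ)
  have : (1 : ℂ) * myF 1 + (1 - 1) * deriv myF 1 = (Real.eulerMascheroniConstant : ℂ) := by
    rw [myF_one]; ring
  rw [this] at h3
  exact h3

lemma myZ_deriv_one : deriv myZ 1 = (Real.eulerMascheroniConstant : ℂ) :=
  myZ_hasDeriv.deriv

lemma myH_one : myH 1 = (Real.eulerMascheroniConstant : ℂ) := by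
  rw [myH, myZ_deriv_one, myZ_one, div_one]

theorem stmt_14 (k : ℕ) (hk : 1 ≤ k) :
    Tendsto
      (fun s : ℂ =>
        ((s - 1) ^ (k + 3) *
            (deriv (fun z => deriv riemannZeta z / riemannZeta z) s
              * (-(deriv riemannZeta s / riemannZeta s)) ^ (k - 1)
              * riemannZeta s ^ 2 * (1 / s))
          - 1) / (s - 1))
      (𝓝[≠] 1) (𝓝 (-1 - ((k : ℂ) - 3) * (Real.eulerMascheroniConstant : ℂ))) := by
  set γ : ℂ := (Real.eulerMascheroniConstant : ℂ)
  -- an open set on which Z is analytic and nonvanishing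
  have hev : ∀ᶠ z in 𝓝 (1 : ℂ), AnalyticAt ℂ myZ z ∧ myZ z ≠ 0 := by
    have h1 := myZ_analytic.eventually_analyticAt
    have h2 : ∀ᶠ z in 𝓝 (1 : ℂ), myZ z ≠ 0 := by
      have := myZ_analytic.continuousAt
      exact this.eventually_ne (by rw [myZ_one]; exact one_ne_zero)
    exact h1.and h2
  obtain ⟨U, hUprop, hUopen, h1U⟩ := eventually_nhds_iff.mp hev
  have hZU : AnalyticOnNhd ℂ myZ U := fun x hx => (hUprop x hx).1
  have hZne : ∀ x ∈ U, myZ x ≠ 0 := fun x hx => (hUprop x hx).2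
  have hZ'U : AnalyticOnNhd ℂ (deriv myZ) U := hZU.deriv
  have hHU : AnalyticOnNhd ℂ myH U := fun x hx =>
    ((hZ'U x hx).div (hZU x hx) (hZne x hx))
  have hH'U : AnalyticOnNhd ℂ (deriv myH) U := hHU.deriv
  -- pointwise identity for log-derivative of zeta
  have key1 : ∀ z ∈ U, z ≠ 1 →
      deriv riemannZeta z / riemannZeta z = myH z - 1 / (z - 1) := by
    intro z hzU hz
    have hw : z - 1 ≠ 0 := sub_ne_zero.2 hz
    have hZd : HasDerivAt myZ (deriv myZ z) z := (hZU z hzU).differentiableAt.hasDerivAt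
    have hwd : HasDerivAt (fun w : ℂ => w - 1) 1 z := (hasDerivAt_id z).sub_const 1
    have hdiv : HasDerivAt (fun w : ℂ => myZ w / (w - 1))
        ((deriv myZ z * (z - 1) - myZ z * 1) / (z - 1) ^ 2) z := hZd.div hwd hw
    have hzeta : HasDerivAt riemannZeta
        ((deriv myZ z * (z - 1) - myZ z * 1) / (z - 1) ^ 2) z := by
      refine hdiv.congr_of_eventuallyEq ?_
      filter_upwards [eventually_ne_nhds hz] with w hw'
      exact zeta_eq hw'
    rw [hzeta.deriv, zeta_eq hz, myH]
    have hZz := hZne z hzU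
    field_simp
  -- deriv of log-derivative of zeta
  have key2 : ∀ z ∈ U, z ≠ 1 →
      deriv (fun w => deriv riemannZeta w / riemannZeta w) z =
        deriv myH z + 1 / (z - 1) ^ 2 := by
    intro z hzU hz
    have hw : z - 1 ≠ 0 := sub_ne_zero.2 hz
    have hHd : HasDerivAt myH (deriv myH z) z := (hHU z hzU).differentiableAt.hasDerivAt
    have hwd : HasDerivAt (fun w : ℂ => w - 1) 1 z := (hasDerivAt_id z).sub_const 1
    have h1w : HasDerivAt (fun w : ℂ => 1 / (w - 1))
        ((0 * (z - 1) - 1 * 1) / (z - 1) ^ 2) z := (hasDerivAt_const z 1).div hwd hw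
    have hsum : HasDerivAt (fun w : ℂ => myH w - 1 / (w - 1))
        (deriv myH z - (0 * (z - 1) - 1 * 1) / (z - 1) ^ 2) z := hHd.sub h1w
    have hcongr : HasDerivAt (fun w => deriv riemannZeta w / riemannZeta w)
        (deriv myH z - (0 * (z - 1) - 1 * 1) / (z - 1) ^ 2) z := by
      refine hsum.congr_of_eventuallyEq ?_
      have hmem : U ∩ {w : ℂ | w ≠ 1} ∈ 𝓝 z :=
        (hUopen.inter isOpen_compl_singleton).mem_nhds ⟨hzU, hz⟩
      filter_upwards [hmem] with w hw'
      exact key1 w hw'.1 hw'.2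
    rw [hcongr.deriv]
    field_simp
    ring
  -- the analytic function P whose derivative at 1 gives the limit
  set P : ℂ → ℂ := fun s =>
    (1 + (s - 1) ^ 2 * deriv myH s) * (1 - (s - 1) * myH s) ^ (k - 1)
      * myZ s ^ 2 * (1 / s) with hP_def
  have hP1 : P 1 = 1 := by simp [hP_def, myZ_one]
  -- main pointwise identity
  have key3 : ∀ z ∈ U, z ≠ 1 →
      (z - 1) ^ (k + 3) *
          (deriv (fun w => deriv riemannZeta w / riemannZeta w) z
            * (-(deriv riemannZeta z / riemannZeta z)) ^ (k - 1)
            * riemannZeta z ^ 2 * (1 / z)) = P z := by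
    intro z hzU hz
    have hw : z - 1 ≠ 0 := sub_ne_zero.2 hz
    rw [key1 z hzU hz, key2 z hzU hz, zeta_eq hz]
    simp only [hP_def]
    set a := deriv myH z
    set b := myH z
    set zz := myZ z
    set w := z - 1
    set u := (1 : ℂ) / z
    have hb : (1 : ℂ) - w * b = w * -(b - 1 / w) := by
      field_simp
      ring
    rw [hb, mul_pow, show k + 3 = (k - 1) + 4 by omega, pow_add]
    set c := (-(b - 1 / w)) ^ (k - 1)
    set W := w ^ (k - 1)
    field_simp
    ring
  -- derivative of P at 1
  have hHd1 : HasDerivAt myH (deriv myH 1) 1 := (hHU 1 h1U).differentiableAt.hasDerivAt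
  have hH'd1 : HasDerivAt (deriv myH) (deriv (deriv myH) 1) 1 :=
    (hH'U 1 h1U).differentiableAt.hasDerivAt
  have hw1 : HasDerivAt (fun s : ℂ => s - 1) 1 1 := (hasDerivAt_id 1).sub_const 1
  have hw2 : HasDerivAt (fun s : ℂ => (s - 1) ^ 2)
      ((2 : ℕ) * ((1 : ℂ) - 1) ^ (2 - 1) * 1) 1 := hw1.pow 2
  have hA : HasDerivAt (fun s : ℂ => 1 + (s - 1) ^ 2 * deriv myH s)
      (((2 : ℕ) * ((1 : ℂ) - 1) ^ (2 - 1) * 1) * deriv myH 1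
        + ((1 : ℂ) - 1) ^ 2 * deriv (deriv myH) 1) 1 := (hw2.mul hH'd1).const_add 1
  have hBin : HasDerivAt (fun s : ℂ => 1 - (s - 1) * myH s)
      (-(1 * myH 1 + ((1 : ℂ) - 1) * deriv myH 1)) 1 := (hw1.mul hHd1).const_sub 1
  have hB : HasDerivAt (fun s : ℂ => (1 - (s - 1) * myH s) ^ (k - 1))
      (((k - 1 : ℕ) : ℂ) * ((1 : ℂ) - ((1 : ℂ) - 1) * myH 1) ^ (k - 1 - 1)
        * (-(1 * myH 1 + ((1 : ℂ) - 1) * deriv myH 1))) 1 := hBin.pow (k - 1)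
  have hCd : HasDerivAt (fun s : ℂ => myZ s ^ 2)
      ((2 : ℕ) * myZ 1 ^ (2 - 1) * deriv myZ 1) 1 :=
    ((hZU 1 h1U).differentiableAt.hasDerivAt).pow 2
  have hDd : HasDerivAt (fun s : ℂ => 1 / s)
      ((0 * 1 - 1 * 1) / (1 : ℂ) ^ 2) 1 := (hasDerivAt_const 1 1).div (hasDerivAt_id 1)
        one_ne_zero
  have hP : HasDerivAt P (-1 - ((k : ℂ) - 3) * γ) 1 := by
    have h := ((hA.mul hB).mul hCd).mul hDd
    refine h.congr_deriv ?_
    symm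
    rw [myZ_one, myZ_deriv_one, myH_one]
    have hkc : ((k - 1 : ℕ) : ℂ) = (k : ℂ) - 1 := by
      push_cast [Nat.cast_sub hk]
      ring
    simp [hkc, myZ_one, γ]
    ring
  -- conclude via slope
  have hslope := hasDerivAt_iff_tendsto_slope.mp hP
  refine hslope.congr' ?_
  have hmem : U ∩ {w : ℂ | w ≠ 1} ∈ 𝓝[≠] (1 : ℂ) := by
    refine inter_mem (nhdsWithin_le_nhds (hUopen.mem_nhds h1U)) self_mem_nhdsWithin
  filter_upwards [hmem] with z hz
  rw [slope_def_field, hP1, key3 z hz.1 hz.2]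
end
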